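/- Let G be a graph with a pendent generalized star R having center c. If c belongs to some zero forcing set S of G, then S is not a minimum zero forcing set of G. -/
import Mathlib


namespace ZF

variable {V : Type*}

/-- The set of vertices forced blue starting from `S`, under the standard color change
rule: a blue vertex with exactly one white neighbor forces that neighbor blue. -/
inductive Forced (G : SimpleGraph V) (S : Set V) : V → Prop
  | init {v : V} : v ∈ S → Forced G S v
  | force {u w : V} : Forced G S u → G.Adj u w →
      (∀ x, G.Adj u x → x ≠ w → Forced G S x) → Forced G S w

/-- `S` is a zero forcing set of `G`. -/
def IsZFS (G : SimpleGraph V) (S : Set V) : Prop := ∀ v, Forced G S v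

/-- `S` is a minimal zero forcing set of `G`. -/
def IsMinimalZFS (G : SimpleGraph V) (S : Set V) : Prop :=
  IsZFS G S ∧ ∀ S' ⊂ S, ¬ IsZFS G S'

/-- The zero forcing number of `G`. -/
noncomputable def zfNum (G : SimpleGraph V) : ℕ :=
  sInf {n | ∃ S : Set V, IsZFS G S ∧ S.ncard = n}

/-- A graph is well-forced if every minimal zero forcing set is minimum. -/
def WellForced (G : SimpleGraph V) : Prop :=
  ∀ S, IsMinimalZFS G S → S.ncard = zfNum G

/-- Degree of a vertex (as the `ncard` of its neighbor set). -/
noncomputable def deg (G : SimpleGraph V) (v : V) : ℕ := (G.neighborSet v).ncard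

end ZF

open ZF SimpleGraph

/-- A structure witnessing that `G` contains a pendent generalized star with center `c`
and `ℓ ≥ 2` legs: `c` is a vertex of degree at least 3 in `G`, and the legs are `ℓ`
pairwise disjoint components of `G - c` that are pendent paths at `c`.  The `i`-th leg
is the path `leg i 0, …, leg i (len i - 1)`, attached to `c` at `leg i 0`, whose
internal vertices have degree 2 in `G` and whose end vertex has degree 1 in `G`.
The length of the `i`-th leg is `len i`. -/
structure PendentStar {V : Type*} (G : SimpleGraph V) (c : V) (ℓ : ℕ) where
  two_le : 2 ≤ ℓ
  deg_center : 3 ≤ deg G c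
  len : Fin ℓ → ℕ
  len_pos : ∀ i, 1 ≤ len i
  leg : Fin ℓ → ℕ → V
  ne_center : ∀ i j, j < len i → leg i j ≠ c
  inj : ∀ i j i' j', j < len i → j' < len i' → leg i j = leg i' j' → i = i' ∧ j = j'
  adj_center : ∀ i, G.Adj c (leg i 0)
  adj_chain : ∀ i j, j + 1 < len i → G.Adj (leg i j) (leg i (j + 1))
  deg_mid : ∀ i j, j + 1 < len i → deg G (leg i j) = 2
  deg_last : ∀ i, deg G (leg i (len i - 1)) = 1

/-- The vertex set of a pendent generalized star. -/
def PendentStar.verts {V : Type*} {G : SimpleGraph V} {c : V} {ℓ : ℕ}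
    (R : PendentStar G c ℓ) : Set V :=
  {c} ∪ {v | ∃ i j, j < R.len i ∧ R.leg i j = v}

set_option linter.unusedSectionVars false

section Aux
variable {V : Type*} [Fintype V] {G : SimpleGraph V}

lemma nb_singleton {u x : V} (h1 : deg G u = 1) (hx : G.Adj u x) :
    G.neighborSet u = {x} := by
  have hsub : ({x} : Set V) ⊆ G.neighborSet u := by
    intro y hy; rcases hy with rfl; exact hx
  have := Set.eq_of_subset_of_ncard_le hsub
    (by rw [Set.ncard_singleton]; exact h1.le) (Set.toFinite _)
  exact this.symm

lemma nb_pair {u x y : V} (h2 : deg G u = 2) (hx : G.Adj u x) (hy : G.Adj u y)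
    (hxy : x ≠ y) : G.neighborSet u = {x, y} := by
  have hsub : ({x, y} : Set V) ⊆ G.neighborSet u := by
    intro z hz; rcases hz with rfl | rfl
    · exact hx
    · exact hy
  have := Set.eq_of_subset_of_ncard_le hsub
    (by rw [Set.ncard_pair hxy]; exact h2.le) (Set.toFinite _)
  exact this.symm

lemma forced_mono {S S' : Set V} (h : ∀ s ∈ S, Forced G S' s) :
    ∀ v, Forced G S v → Forced G S' v := by
  intro v hv
  induction hv with
  | init hv => exact h _ hv
  | force hu hadj hall ihu ihall => exact Forced.force ihu hadj ihall

variable {c : V} {ℓ : ℕ} (R : PendentStar G c ℓ)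

/-- If `u` forces `w`, `u` is outside legs `a` and `b`, and the forcing hypothesis keeps
everything (other than `w`) out of leg `b`, then `w` is not in leg `a`. -/
lemma force_step_ne {u w : V} (a b : Fin ℓ) (hab : a ≠ b) (hadj : G.Adj u w)
    (hu_a : ∀ j, j < R.len a → u ≠ R.leg a j)
    (hx : ∀ x, G.Adj u x → x ≠ w → ∀ j, j < R.len b → x ≠ R.leg b j) :
    ∀ j, j < R.len a → w ≠ R.leg a j := by
  rintro j hj rfl
  have hu : u ∈ G.neighborSet (R.leg a j) := hadj.symm
  have huc : u = c → False := by
    rintro rfl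
    have hb0 : R.leg b 0 ≠ R.leg a j := by
      intro h
      exact hab ((R.inj b 0 a j (R.len_pos b) hj h).1.symm)
    exact hx (R.leg b 0) (R.adj_center b) hb0 0 (R.len_pos b) rfl
  rcases Nat.lt_or_ge (j + 1) (R.len a) with hjlt | hjge
  · -- j is not the last vertex
    rcases Nat.eq_zero_or_pos j with rfl | hjpos
    · -- j = 0, neighbors are c and leg a 1
      have hnb : G.neighborSet (R.leg a 0) = {c, R.leg a 1} :=
        nb_pair (R.deg_mid a 0 hjlt) (R.adj_center a).symm (R.adj_chain a 0 hjlt)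
          (Ne.symm (R.ne_center a 1 hjlt))
      rw [hnb] at hu
      rcases hu with rfl | rfl
      · exact huc rfl
      · exact hu_a 1 hjlt rfl
    · -- 0 < j, neighbors are leg (j-1) and leg (j+1)
      have hj1 : (j - 1) + 1 = j := by omega
      have hprev : G.Adj (R.leg a j) (R.leg a (j - 1)) := by
        have := R.adj_chain a (j - 1) (by omega)
        rw [hj1] at this; exact this.symm
      have hnb : G.neighborSet (R.leg a j) = {R.leg a (j - 1), R.leg a (j + 1)} :=
        nb_pair (R.deg_mid a j hjlt) hprev (R.adj_chain a j hjlt)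
          (by
            intro h
            have := (R.inj a (j - 1) a (j + 1) (by omega) hjlt h).2
            omega)
      rw [hnb] at hu
      rcases hu with rfl | rfl
      · exact hu_a (j - 1) (by omega) rfl
      · exact hu_a (j + 1) hjlt rfl
  · -- j is the last vertex: j = len a - 1
    have hjeq : j = R.len a - 1 := by omega
    rcases Nat.eq_zero_or_pos j with rfl | hjpos
    · -- single-vertex leg: unique neighbor is c
      have hnb : G.neighborSet (R.leg a 0) = {c} := by
        have hd : deg G (R.leg a 0) = 1 := by
          have := R.deg_last a
          rwa [← hjeq] at this
        exact nb_singleton hd (R.adj_center a).symm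
      rw [hnb] at hu
      rcases hu with rfl
      exact huc rfl
    · have hj1 : (j - 1) + 1 = j := by omega
      have hprev : G.Adj (R.leg a j) (R.leg a (j - 1)) := by
        have := R.adj_chain a (j - 1) (by omega)
        rw [hj1] at this; exact this.symm
      have hd : deg G (R.leg a j) = 1 := by
        have := R.deg_last a
        rwa [← hjeq] at this
      have hnb : G.neighborSet (R.leg a j) = {R.leg a (j - 1)} := nb_singleton hd hprev
      rw [hnb] at hu
      rcases hu with rfl
      exact hu_a (j - 1) (by omega) rfl

/-- If two distinct legs are disjoint from `S`, no vertex of either leg is ever forced. -/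
lemma not_forced_two_legs {S : Set V} {i0 i1 : Fin ℓ} (hne : i0 ≠ i1)
    (h0 : ∀ j, j < R.len i0 → R.leg i0 j ∉ S)
    (h1 : ∀ j, j < R.len i1 → R.leg i1 j ∉ S) :
    ∀ v, Forced G S v →
      (∀ j, j < R.len i0 → v ≠ R.leg i0 j) ∧ (∀ j, j < R.len i1 → v ≠ R.leg i1 j) := by
  intro v hv
  induction hv with
  | init hv =>
    constructor <;> · rintro j hj rfl; first | exact h0 j hj hv | exact h1 j hj hv
  | force hu hadj hall ihu ihall =>
    constructor
    · exact force_step_ne R i0 i1 hne hadj ihu.1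
        (fun x hx hxw => (ihall x hx hxw).2)
    · exact force_step_ne R i1 i0 hne.symm hadj ihu.2
        (fun x hx hxw => (ihall x hx hxw).1)

/-- If the last vertex of leg `i` is forced, the whole leg and the center get forced. -/
lemma leg_forces {S' : Set V} (i : Fin ℓ)
    (he : Forced G S' (R.leg i (R.len i - 1))) :
    (∀ j, j < R.len i → Forced G S' (R.leg i j)) ∧ Forced G S' c := by
  have hlen := R.len_pos i
  have key : ∀ k, k < R.len i → Forced G S' (R.leg i (R.len i - 1 - k)) := by
    intro k
    induction k using Nat.strong_induction_on with
    | _ k ih =>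
      intro hk
      rcases Nat.eq_zero_or_pos k with rfl | hkpos
      · simpa using he
      · set m := R.len i - 1 - k with hm
        have hm1 : m + 1 = R.len i - 1 - (k - 1) := by omega
        have hm1lt : m + 1 < R.len i := by omega
        have hu : Forced G S' (R.leg i (m + 1)) := by
          rw [hm1]; exact ih (k - 1) (by omega) (by omega)
        refine Forced.force hu (R.adj_chain i m hm1lt).symm ?_
        intro x hx hxm
        rcases Nat.lt_or_ge (m + 2) (R.len i) with h2 | h2
        · -- middle vertex: neighbors leg m and leg (m+2)
          have hnb : G.neighborSet (R.leg i (m + 1)) = {R.leg i m, R.leg i (m + 2)} :=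
            nb_pair (R.deg_mid i (m + 1) h2) (R.adj_chain i m hm1lt).symm
              (R.adj_chain i (m + 1) h2)
              (by
                intro h
                have := (R.inj i m i (m + 2) (by omega) h2 h).2
                omega)
          have hxmem : x ∈ G.neighborSet (R.leg i (m + 1)) := hx
          rw [hnb] at hxmem
          rcases hxmem with rfl | rfl
          · exact absurd rfl hxm
          · have : m + 2 = R.len i - 1 - (k - 2) := by omega
            rw [this]; exact ih (k - 2) (by omega) (by omega)
        · -- m+1 is the last vertex
          have hd : deg G (R.leg i (m + 1)) = 1 := by
            have := R.deg_last i
            have hme : m + 1 = R.len i - 1 := by omega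
            rwa [← hme] at this
          have hnb : G.neighborSet (R.leg i (m + 1)) = {R.leg i m} :=
            nb_singleton hd (R.adj_chain i m hm1lt).symm
          have hxmem : x ∈ G.neighborSet (R.leg i (m + 1)) := hx
          rw [hnb] at hxmem
          rcases hxmem with rfl
          exact absurd rfl hxm
  have hall : ∀ j, j < R.len i → Forced G S' (R.leg i j) := by
    intro j hj
    have : j = R.len i - 1 - (R.len i - 1 - j) := by omega
    rw [this]; exact key (R.len i - 1 - j) (by omega)
  refine ⟨hall, ?_⟩
  have h0 : Forced G S' (R.leg i 0) := hall 0 hlen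
  refine Forced.force h0 (R.adj_center i).symm ?_
  intro x hx hxc
  rcases Nat.lt_or_ge 1 (R.len i) with h1 | h1
  · have hnb : G.neighborSet (R.leg i 0) = {c, R.leg i 1} :=
      nb_pair (R.deg_mid i 0 h1) (R.adj_center i).symm (R.adj_chain i 0 h1)
        (Ne.symm (R.ne_center i 1 h1))
    have hxmem : x ∈ G.neighborSet (R.leg i 0) := hx
    rw [hnb] at hxmem
    rcases hxmem with rfl | rfl
    · exact absurd rfl hxc
    · exact hall 1 h1
  · have hd : deg G (R.leg i 0) = 1 := by
      have := R.deg_last i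
      have : R.len i - 1 = 0 := by omega
      simpa [this] using R.deg_last i
    have hnb : G.neighborSet (R.leg i 0) = {c} := nb_singleton hd (R.adj_center i).symm
    have hxmem : x ∈ G.neighborSet (R.leg i 0) := hx
    rw [hnb] at hxmem
    rcases hxmem with rfl
    exact absurd rfl hxc

end Aux

/-- Let `G` be a graph with a pendent generalized star `R` having center
`c`.  If `c` belongs to some zero forcing set `S` of `G`, then `S` is not a minimum
zero forcing set of `G`. -/
theorem pendentstar_center_not_minimum {V : Type*} [Fintype V] (G : SimpleGraph V)
    (c : V) (ℓ : ℕ) (R : PendentStar G c ℓ) (S : Set V)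
    (hS : IsZFS G S) (hc : c ∈ S) :
    S.ncard ≠ zfNum G := by
  -- two distinct legs
  have h01 : (⟨0, by have := R.two_le; omega⟩ : Fin ℓ) ≠ ⟨1, by have := R.two_le; omega⟩ := by
    intro h; simpa using congrArg Fin.val h
  -- some leg meets S
  have hmeet : ∃ i j, j < R.len i ∧ R.leg i j ∈ S := by
    by_contra h
    push_neg at h
    have := (not_forced_two_legs R h01
      (fun j hj => h _ j hj) (fun j hj => h _ j hj)
      (R.leg ⟨0, by have := R.two_le; omega⟩ 0) (hS _)).1 0 (R.len_pos _) rfl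
    exact this
  obtain ⟨i, j0, hj0, hj0S⟩ := hmeet
  set e := R.leg i (R.len i - 1) with he_def
  set T := S ∩ ({c} ∪ {v | ∃ j, j < R.len i ∧ R.leg i j = v}) with hT
  set S' := (S \ T) ∪ {e} with hS'
  -- S' is a zero forcing set
  have he : Forced G S' e := Forced.init (Or.inr rfl)
  obtain ⟨hlegs, hc'⟩ := leg_forces R i he
  have hZFS' : IsZFS G S' := by
    have hSsub : ∀ s ∈ S, Forced G S' s := by
      intro s hs
      by_cases hsT : s ∈ T
      · rcases hsT.2 with h | ⟨j, hj, rfl⟩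
        · rcases h with rfl; exact hc'
        · exact hlegs j hj
      · exact Forced.init (Or.inl ⟨hs, hsT⟩)
    intro v; exact forced_mono hSsub v (hS v)
  -- cardinalities
  have hTsub : T ⊆ S := Set.inter_subset_left
  have hcp : c ≠ R.leg i j0 := Ne.symm (R.ne_center i j0 hj0)
  have hpair : ({c, R.leg i j0} : Set V) ⊆ T := by
    rintro x (rfl | rfl)
    · exact ⟨hc, Or.inl rfl⟩
    · exact ⟨hj0S, Or.inr ⟨j0, hj0, rfl⟩⟩
  have h2T : 2 ≤ T.ncard := by
    rw [← Set.ncard_pair hcp]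
    exact Set.ncard_le_ncard hpair (Set.toFinite T)
  have hTle : T.ncard ≤ S.ncard := Set.ncard_le_ncard hTsub (Set.toFinite S)
  have hdiff : (S \ T).ncard = S.ncard - T.ncard := Set.ncard_diff hTsub (Set.toFinite T)
  have hS'le : S'.ncard ≤ (S \ T).ncard + 1 := by
    have h := Set.ncard_union_le (S \ T) ({e} : Set V)
    rw [Set.ncard_singleton] at h
    exact h
  have h2S : 2 ≤ S.ncard := by
    rw [← Set.ncard_pair hcp]
    exact Set.ncard_le_ncard (hpair.trans hTsub) (Set.toFinite S)
  have hlt : S'.ncard < S.ncard := by omega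
  have hz : zfNum G ≤ S'.ncard := Nat.sInf_le ⟨S', hZFS', rfl⟩
  omega
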